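/- arXiv:0903.3848 — 2 statements merged into one kernel-verified Lean document; each statement's English description precedes it below -/
import Mathlib

section
/- (Salomaa) The arity gap of any Boolean function with at least two essential variables is at most 2. -/
open Classical

/-- Boolean functions of arity `n` over GF(2). -/
abbrev BFn (n : ℕ) := (Fin n → ZMod 2) → ZMod 2

/-- Boolean functions of arbitrary arity. -/
abbrev BF := Σ n : ℕ, BFn n

/-- `g` is a simple minor of `f`. -/
def Minor {m n : ℕ} (g : BFn m) (f : BFn n) : Prop :=
  ∃ σ : Fin n → Fin m, ∀ a : Fin m → ZMod 2, g a = f (fun i => a (σ i))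

def MinorS (G F : BF) : Prop := Minor G.2 F.2

def EquivS (G F : BF) : Prop := MinorS G F ∧ MinorS F G

def StrictMinorS (G F : BF) : Prop := MinorS G F ∧ ¬ MinorS F G

/-- `x i` is an essential variable of `f`. -/
def Essential {n : ℕ} (f : BFn n) (i : Fin n) : Prop :=
  ∃ a b : Fin n → ZMod 2, (∀ j, j ≠ i → a j = b j) ∧ f a ≠ f b

noncomputable def essArity {n : ℕ} (f : BFn n) : ℕ :=
  (Finset.univ.filter fun i => Essential f i).card

noncomputable def essS (F : BF) : ℕ := essArity F.2

/-- `f_{i=j}` : identify variable `i` with variable `j`. -/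
def identify {n : ℕ} (f : BFn n) (i j : Fin n) : BFn n :=
  fun a => f (fun t => if t = i then a j else a t)

/-- `G` is a lower cover of `F` in the poset of equivalence classes. -/
def LowerCover (G F : BF) : Prop :=
  StrictMinorS G F ∧ ¬ ∃ H : BF, StrictMinorS G H ∧ StrictMinorS H F

/-- `F` is join-irreducible: some strict minor dominates all strict minors. -/
def JoinIrred (F : BF) : Prop :=
  ∃ F' : BF, StrictMinorS F' F ∧ ∀ G : BF, StrictMinorS G F → MinorS G F'

noncomputable def arityGap (F : BF) : ℕ :=
  sInf {d : ℕ | ∃ G : BF, StrictMinorS G F ∧ d = essS F - essS G}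

/-- Hypergraphs on vertex set `Fin n`. -/
abbrev HG (n : ℕ) := Finset (Finset (Fin n))

abbrev HGS := Σ n : ℕ, HG n

/-- `h` is a quotient map from `(Fin m, E')` to `(Fin n, E)`. -/
def IsQuotientMap {m n : ℕ} (E' : HG m) (E : HG n) (h : Fin m → Fin n) : Prop :=
  ∀ S : Finset (Fin n), S ∈ E ↔ Odd (E'.filter (fun T => T.image h = S)).card

/-- `H ⪯ H'` : there is a quotient map from `H'` to `H`. -/
def MinorH (H H' : HGS) : Prop :=
  ∃ h : Fin H'.1 → Fin H.1, IsQuotientMap H'.2 H.2 h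

/-- The hypergraph `H_{h'}` determined by a hypergraph and a map. -/
noncomputable def quotientHG {m n : ℕ} (E' : HG m) (h : Fin m → Fin n) : HG n :=
  Finset.univ.filter fun S => Odd (E'.filter (fun T => T.image h = S)).card

/-- The Boolean function of a hypergraph: evaluation of `Σ_{E} Π_{i ∈ E} x_i`. -/
def fHG {n : ℕ} (E : HG n) : BFn n :=
  fun a => ∑ S ∈ E, ∏ i ∈ S, a i

/-- A Steiner system (`2-(n,k,1)` design). -/
def IsSteiner {n : ℕ} (k : ℕ) (E : HG n) : Prop :=
  (∀ S ∈ E, S.card = k) ∧ ∀ i j : Fin n, i ≠ j → ∃! S, S ∈ E ∧ i ∈ S ∧ j ∈ S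

/-- Vertex set of the identification hypergraph `H_e`, `e = {i,j}`:
`(V \ e) ∪ {l_e}` where `none` plays the role of the new vertex `l_e`. -/
abbrev IdVert {n : ℕ} (i j : Fin n) := Option {x : Fin n // x ≠ i ∧ x ≠ j}

/-- The underlying subset of `V` of a set of vertices of `H_e` (ignoring `l_e`). -/
def baseSet {n : ℕ} {i j : Fin n} (E : Finset (IdVert i j)) : Finset (Fin n) :=
  E.biUnion fun o => o.elim ∅ fun x => {x.val}

/-- Exactly one or all three of `p`, `q`, `r` hold. -/
def OneOrAllThree (p q r : Prop) : Prop :=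
  (p ∧ ¬q ∧ ¬r) ∨ (¬p ∧ q ∧ ¬r) ∨ (¬p ∧ ¬q ∧ r) ∨ (p ∧ q ∧ r)

/-- The hyperedges of the identification hypergraph `H_e`, `e = {i,j}`. -/
noncomputable def idEdges {n : ℕ} (𝓔 : HG n) (i j : Fin n) :
    Finset (Finset (IdVert i j)) :=
  Finset.univ.filter fun E =>
    (none ∉ E ∧ baseSet E ∈ 𝓔) ∨
    (none ∈ E ∧ OneOrAllThree (insert i (insert j (baseSet E)) ∈ 𝓔)
      (insert i (baseSet E) ∈ 𝓔) (insert j (baseSet E) ∈ 𝓔))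

/-- The hyperedges of the induced hypergraph `H_{-e}` on `V \ e`, `e = {i,j}`. -/
noncomputable def minusEdges {n : ℕ} (𝓔 : HG n) (i j : Fin n) :
    Finset (Finset {x : Fin n // x ≠ i ∧ x ≠ j}) :=
  Finset.univ.filter fun E => E.image Subtype.val ∈ 𝓔

/-- `φ` is an isomorphism of hypergraphs. -/
def IsHGIso {α β : Type*} (𝓐 : Finset (Finset α)) (𝓑 : Finset (Finset β))
    (φ : α ≃ β) : Prop :=
  ∀ E : Finset α, E ∈ 𝓐 ↔ E.image φ ∈ 𝓑

/-- The (loopless) graph associated with a set of 2-element edges. -/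
def graphOf {n : ℕ} (𝓔 : HG n) : SimpleGraph (Fin n) where
  Adj v w := v ≠ w ∧ ({v, w} : Finset (Fin n)) ∈ 𝓔
  symm := by
    constructor
    intro v w h
    exact ⟨h.1.symm, by rw [Finset.pair_comm]; exact h.2⟩
  loopless := by
    constructor
    intro v h
    exact h.1 rfl

/-!
Identifying an essential variable `u` of `f` with another essential variable `v` gives a strict
minor. It kills `u`; it kills `v` iff, on the hyperplane `x u = x v`, `f` is invariant under
flipping `x u` and `x v` together; and it kills another variable `k` iff `f` does not depend on
`x k` on that hyperplane. So it suffices to find a pair that kills at most one variable besides `u`.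

Suppose every pair kills at least two more. Since flips are involutions over GF(2), invariances
on hyperplanes can be chained until some essential variable turns out to be a dummy. If every pair
kills its second variable, a triangle of such pairs already does this. Otherwise take a pair
`(u, v)` not killing `v` whose set `T` of further killed variables is smallest. Minimality makes
every pair inside `T` kill both its members; then the sets killed by `(v, k)`, `k ∈ T`, are
disjoint subsets of `T ∪ {u}`, and counting shows that either every `(v, k)` kills `u`, making `u`
a dummy, or some `(v, k)` kills both its members. The same holds with `u` and `v` exchanged, and
two such `k` force `(u, v)` to kill `v` after all.
-/

lemma ZMod.eq_add_one_of_ne {a b : ZMod 2} (h : a ≠ b) : a = b + 1 := by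
  revert a b; decide

namespace ArityGap

variable {ι β : Type*} [DecidableEq ι]

def basisVec (k : ι) : ι → ZMod 2 := Pi.single k 1

local notation "𝐞" => basisVec

@[simp] lemma basisVec_apply_self (k : ι) : 𝐞 k k = 1 := Pi.single_eq_same k 1

@[simp] lemma basisVec_apply_of_ne {k t : ι} (h : t ≠ k) : 𝐞 k t = 0 := Pi.single_eq_of_ne h 1

@[simp] lemma basisVec_apply_of_ne' {k t : ι} (h : k ≠ t) : 𝐞 k t = 0 := Pi.single_eq_of_ne' h 1


lemma add_basisVec_add_basisVec_self (x : ι → ZMod 2) (k : ι) : x + 𝐞 k + 𝐞 k = x := by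
  ext t
  by_cases h : t = k
  · subst h
    rw [Pi.add_apply, Pi.add_apply, basisVec_apply_self, add_assoc]
    exact add_eq_left.mpr (by decide)
  · simp [h]

lemma apply_add_basisVec_add_basisVec_eq {x : ι → ZMod 2} {u v : ι} (hx : x u = x v) :
    (x + 𝐞 u + 𝐞 v) u = (x + 𝐞 u + 𝐞 v) v := by
  by_cases huv : u = v
  · rw [huv]
  · simp [huv, Ne.symm huv, hx]

/-- On the hyperplane `x u = x v`, `f` does not depend on `x k`: identifying `u` with `v` kills
the variable `k`. -/
def Lost (f : (ι → ZMod 2) → β) (u v k : ι) : Prop :=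
  ∀ x : ι → ZMod 2, x u = x v → f (x + 𝐞 k) = f x
/-- On the hyperplane `x u = x v`, `f` is invariant under flipping `x u` and `x v` together:
identifying `u` with `v` kills the variable `v` too. -/
def LostPair (f : (ι → ZMod 2) → β) (u v : ι) : Prop :=
  ∀ x : ι → ZMod 2, x u = x v → f (x + 𝐞 u + 𝐞 v) = f x

section

variable {f : (ι → ZMod 2) → β} {u v k l w : ι}

lemma Lost.symm (h : Lost f u v k) : Lost f v u k := fun x hx => h x hx.symm

lemma Lost.pair_flip_eq_of_add_basisVec (hk : Lost f u v k) {x : ι → ZMod 2} (hx : x u = x v)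
    (h : f (x + 𝐞 k + 𝐞 u + 𝐞 v) = f (x + 𝐞 k)) : f (x + 𝐞 u + 𝐞 v) = f x := by
  calc f (x + 𝐞 u + 𝐞 v) = f (x + 𝐞 u + 𝐞 v + 𝐞 k) :=
        (hk _ (apply_add_basisVec_add_basisVec_eq hx)).symm
    _ = f (x + 𝐞 k + 𝐞 u + 𝐞 v) := by congr 1; abel
    _ = f x := by rw [h, hk x hx]

lemma lostPair_of_lost_of_lost (hk : Lost f u v k) (hu : Lost f k l u) (hv : Lost f k l v)
    (hku : k ≠ u) (hlu : l ≠ u) (hkl : k ≠ l) : LostPair f u v := by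
  have on_kl : ∀ y : ι → ZMod 2, y k = y l → f (y + 𝐞 u + 𝐞 v) = f y := fun y hy => by
    rw [hv _ (by simpa [hku, hlu] using hy), hu y hy]
  intro x hx
  by_cases hc : x k = x l
  · exact on_kl x hc
  · exact hk.pair_flip_eq_of_add_basisVec hx
      (on_kl _ (by simpa [hkl] using (ZMod.eq_add_one_of_ne (Ne.symm hc)).symm))

/-- Moving along the lost directions `k` and `l`, every point of the hyperplane `x u = x v` can be
brought to one with `x k = x u + a` and `x l = x u + b`. -/
lemma lostPair_of_lost_of_lost_of_forall (hk : Lost f u v k) (hl : Lost f u v l)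
    (hku : k ≠ u) (hkv : k ≠ v) (hlu : l ≠ u) (hlv : l ≠ v) (hkl : k ≠ l) (a b : ZMod 2)
    (h : ∀ x : ι → ZMod 2, x u = x v → x k = x u + a → x l = x u + b →
      f (x + 𝐞 u + 𝐞 v) = f x) : LostPair f u v := by
  have hl' : ∀ x : ι → ZMod 2, x u = x v → x l = x u + b → f (x + 𝐞 u + 𝐞 v) = f x := by
    intro x hx hxl
    by_cases hxk : x k = x u + a
    · exact h x hx hxk hxl
    · exact hk.pair_flip_eq_of_add_basisVec hx (h _ (by simpa [hku, hkv] using hx)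
        (by simpa [hku] using (ZMod.eq_add_one_of_ne (Ne.symm hxk)).symm)
        (by simpa [hku, hkl.symm] using hxl))
  intro x hx
  by_cases hxl : x l = x u + b
  · exact hl' x hx hxl
  · exact hl.pair_flip_eq_of_add_basisVec hx (hl' _ (by simpa [hlu, hlv] using hx)
      (by simpa [hlu] using (ZMod.eq_add_one_of_ne (Ne.symm hxl)).symm))

lemma Lost.trans (hk : Lost f u v k) (hw : Lost f l k w) (hwu : w ≠ u) (hwv : w ≠ v)
    (hlk : l ≠ k) : Lost f u v w := by
  intro x hx
  by_cases hc : x l = x k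
  · exact hw x hc
  calc f (x + 𝐞 w) = f (x + 𝐞 w + 𝐞 k) := (hk _ (by simpa [hwu, hwv] using hx)).symm
    _ = f (x + 𝐞 k + 𝐞 w) := by rw [add_right_comm]
    _ = f (x + 𝐞 k) := hw _ (by simpa [hlk] using ZMod.eq_add_one_of_ne hc)
    _ = f x := hk x hx

lemma add_basisVec_invariant_of_lost_of_lost_of_lostPair (hk : Lost f l k w) (hl : Lost f l v w)
    (hP : LostPair f k v) (hlk : l ≠ k) (hlv : l ≠ v) (hkv : k ≠ v) (hwk : w ≠ k) (hwv : w ≠ v) :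
    ∀ x, f (x + 𝐞 w) = f x := by
  intro x
  by_cases c1 : x l = x k
  · exact hk x c1
  by_cases c2 : x l = x v
  · exact hl x c2
  have hxkv : x k = x v := by
    rw [ZMod.eq_add_one_of_ne (Ne.symm c1), ZMod.eq_add_one_of_ne (Ne.symm c2)]
  calc f (x + 𝐞 w) = f (x + 𝐞 w + 𝐞 k + 𝐞 v) := (hP _ (by simpa [hwk, hwv] using hxkv)).symm
    _ = f (x + 𝐞 k + 𝐞 v + 𝐞 w) := by congr 1; abel
    _ = f (x + 𝐞 k + 𝐞 v) := hk _ (by simpa [hlk, hlv, hkv] using ZMod.eq_add_one_of_ne c1)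
    _ = f x := hP x hxkv

lemma lostPair_of_lostPair_of_lostPair (hk : Lost f u v k) (hl : Lost f u v l)
    (hPu : LostPair f u k) (hPv : LostPair f v l) (huv : u ≠ v) (hku : k ≠ u) (hkv : k ≠ v)
    (hlu : l ≠ u) (hlv : l ≠ v) (hkl : k ≠ l) : LostPair f u v := by
  refine lostPair_of_lost_of_lost_of_forall hk hl hku hkv hlu hlv hkl 0 0 fun x hx hxk hxl => ?_
  rw [add_zero] at hxk hxl
  calc f (x + 𝐞 u + 𝐞 v) = f (x + 𝐞 u + 𝐞 v + 𝐞 l) :=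
        (hl _ (apply_add_basisVec_add_basisVec_eq hx)).symm
    _ = f (x + 𝐞 u + 𝐞 v + 𝐞 l + 𝐞 k) := (hk _ (by simp [huv, huv.symm, hlu, hlv, hx])).symm
    _ = f (x + 𝐞 u + 𝐞 k + 𝐞 v + 𝐞 l) := by congr 1; abel
    _ = f (x + 𝐞 u + 𝐞 k) := hPv _ (by simp [huv.symm, hkv, hlu, hkl, ← hx, hxl])
    _ = f x := hPu x hxk.symm

lemma lostPair_of_lostPair_of_lostPair_of_lostPair (hk : Lost f u v k) (hl : Lost f u v l)
    (hPu : LostPair f u k) (hPv : LostPair f v k) (hPkl : LostPair f k l) (huv : u ≠ v)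
    (hku : k ≠ u) (hkv : k ≠ v) (hlu : l ≠ u) (hlv : l ≠ v) (hkl : k ≠ l) : LostPair f u v := by
  refine lostPair_of_lost_of_lost_of_forall hk hl hku hkv hlu hlv hkl 0 1 fun x hx hxk hxl => ?_
  rw [add_zero] at hxk
  calc f (x + 𝐞 u + 𝐞 v) = f (x + 𝐞 u + 𝐞 v + 𝐞 l) :=
        (hl _ (apply_add_basisVec_add_basisVec_eq hx)).symm
    _ = f (x + 𝐞 u + 𝐞 v + 𝐞 l + 𝐞 k) := (hk _ (by simp [huv, huv.symm, hlu, hlv, hx])).symm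
    _ = f (x + 𝐞 u + 𝐞 l + 𝐞 v + 𝐞 k) := by congr 1; abel
    _ = f (x + 𝐞 u + 𝐞 l) := hPv _ (by simp [huv.symm, hlv, hkl, hku, ← hx, hxk])
    _ = f (x + 𝐞 u + 𝐞 k + 𝐞 k + 𝐞 l) := by rw [add_basisVec_add_basisVec_self]
    _ = f (x + 𝐞 u + 𝐞 k) := hPkl _ (by simp [hku, hkl, hlu, hxk, hxl])
    _ = f x := hPu x hxk.symm

lemma LostPair.apply_add_add_of_apply_eq (hPw : LostPair f u w) (hQw : LostPair f v w)
    (huv : u ≠ v) (hwu : w ≠ u) (hwv : w ≠ v) {x : ι → ZMod 2} (hxw : x w = x u)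
    (hxuv : x u ≠ x v) : f (x + 𝐞 u + 𝐞 v) = f x := by
  calc f (x + 𝐞 u + 𝐞 v) = f (x + 𝐞 u + 𝐞 w + 𝐞 v + 𝐞 w) := by
        rw [add_right_comm (x + 𝐞 u + 𝐞 w), add_basisVec_add_basisVec_self]
    _ = f (x + 𝐞 u + 𝐞 w) :=
        hQw _ (by simp [huv, hwu, hwv, hxw, ZMod.eq_add_one_of_ne hxuv.symm])
    _ = f x := hPw x hxw.symm

lemma LostPair.add_invariant (hP : LostPair f u v) (hPw : LostPair f u w) (hQw : LostPair f v w)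
    (huv : u ≠ v) (hwu : w ≠ u) (hwv : w ≠ v) : ∀ x, f (x + 𝐞 u + 𝐞 v) = f x := by
  intro x
  by_cases hxuv : x u = x v
  · exact hP x hxuv
  by_cases hxw : x w = x u
  · exact hPw.apply_add_add_of_apply_eq hQw huv hwu hwv hxw hxuv
  · rw [add_right_comm]
    refine hQw.apply_add_add_of_apply_eq hPw huv.symm hwv hwu ?_ (Ne.symm hxuv)
    rw [ZMod.eq_add_one_of_ne hxw, ZMod.eq_add_one_of_ne (Ne.symm hxuv)]

lemma Lost.add_invariant_of_add_invariant (hk : Lost f u v k)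
    (hinv : ∀ x, f (x + 𝐞 u + 𝐞 k) = f x) (huv : u ≠ v) : ∀ x, f (x + 𝐞 k) = f x := by
  intro x
  by_cases hx : x u = x v
  · exact hk x hx
  calc f (x + 𝐞 k) = f (x + 𝐞 k + 𝐞 u + 𝐞 k) := (hinv _).symm
    _ = f (x + 𝐞 u) := by rw [add_right_comm x, add_basisVec_add_basisVec_self]
    _ = f (x + 𝐞 u + 𝐞 k) :=
        (hk _ (by simpa [huv] using (ZMod.eq_add_one_of_ne (Ne.symm hx)).symm)).symm
    _ = f x := hinv x

end

open Finset

variable {n : ℕ} {f : BFn n} {u v k : Fin n}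

lemma essential_iff_exists_apply_add_ne : Essential f k ↔ ∃ x, f (x + 𝐞 k) ≠ f x := by
  constructor
  · rintro ⟨a, b, hab, hne⟩
    have hk : a k ≠ b k := fun h => hne <| congrArg f <| funext fun j => by
      by_cases hj : j = k
      · subst hj; exact h
      · exact hab j hj
    have hb : a + 𝐞 k = b := funext fun j => by
      by_cases hj : j = k
      · subst hj; simp [ZMod.eq_add_one_of_ne (Ne.symm hk)]
      · simp [hj, hab j hj]
    exact ⟨a, hb ▸ Ne.symm hne⟩
  · rintro ⟨x, hx⟩
    exact ⟨x + 𝐞 k, x, fun j hj => by simp [hj], hx⟩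

lemma not_essential_iff : ¬ Essential f k ↔ ∀ x, f (x + 𝐞 k) = f x := by
  simp [essential_iff_exists_apply_add_ne]

noncomputable def essVars (f : BFn n) : Finset (Fin n) :=
  univ.filter fun i => Essential f i

@[simp] lemma mem_essVars : k ∈ essVars f ↔ Essential f k := by
  simp [essVars]

lemma essArity_eq_card_essVars (f : BFn n) : essArity f = #(essVars f) := rfl

lemma apply_eq_of_forall_essential {x y : Fin n → ZMod 2}
    (h : ∀ t, Essential f t → x t = y t) : f x = f y := by
  suffices key : ∀ s : Finset (Fin n), (∀ t ∈ s, ¬ Essential f t) →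
      ∀ x, (∀ t ∉ s, x t = y t) → f x = f y from
    key (univ.filter fun t => ¬ Essential f t) (by simp) x fun t ht => h t (by simpa using ht)
  intro s
  induction s using Finset.induction_on with
  | empty => intro _ x hx; rw [funext fun t => hx t (notMem_empty t)]
  | insert a s _ ih =>
    intro hs x hx
    have hxa : f x = f (Function.update x a (y a)) := by
      by_contra hne
      exact hs a (mem_insert_self a s)
        ⟨x, _, fun j hj => (Function.update_of_ne hj _ _).symm, hne⟩
    rw [hxa]
    refine ih (fun t ht => hs t (mem_insert_of_mem ht)) _ fun t ht => ?_
    by_cases hta : t = a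
    · subst hta; simp
    · rw [Function.update_of_ne hta]; exact hx t (by simp [hta, ht])

lemma exists_essential_of_essential_comp {m : ℕ} {g : BFn m} {σ : Fin n → Fin m}
    (hσ : ∀ a, g a = f (fun i => a (σ i))) {i : Fin m} (hi : Essential g i) :
    ∃ t, σ t = i ∧ Essential f t := by
  obtain ⟨a, b, hab, hne⟩ := hi
  rw [hσ, hσ] at hne
  by_contra! h
  exact hne (apply_eq_of_forall_essential fun t ht => hab _ (h t · ht))

lemma essArity_le_of_minor {m : ℕ} {g : BFn m} (h : Minor g f) : essArity g ≤ essArity f := by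
  obtain ⟨σ, hσ⟩ := h
  have hsub : essVars g ⊆ (essVars f).image σ := fun i hi => by
    obtain ⟨t, rfl, ht⟩ := exists_essential_of_essential_comp hσ (mem_essVars.mp hi)
    exact mem_image_of_mem σ (mem_essVars.mpr ht)
  exact (card_le_card hsub).trans card_image_le

lemma identify_eq_comp (f : BFn n) (u v : Fin n) (a : Fin n → ZMod 2) :
    identify f u v a = f fun i => a (if i = u then v else i) := by
  unfold identify
  congr 1
  funext t
  split_ifs <;> rfl

lemma minor_identify (f : BFn n) (u v : Fin n) : Minor (identify f u v) f :=
  ⟨_, identify_eq_comp f u v⟩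

lemma essVars_identify_subset (hv : Essential f v) (huv : u ≠ v) :
    essVars (identify f u v) ⊆ (essVars f).erase u := fun k hk => by
  obtain ⟨t, rfl, ht⟩ := exists_essential_of_essential_comp (identify_eq_comp f u v)
    (mem_essVars.mp hk)
  by_cases htu : t = u
  · simp [htu, hv, Ne.symm huv]
  · simp [htu, ht]

lemma identify_apply_of_eq {x : Fin n → ZMod 2} (hx : x u = x v) : identify f u v x = f x := by
  unfold identify
  congr 1
  funext t
  split_ifs with h
  · rw [h, hx]
  · rfl

lemma identify_apply_add_basisVec_self (huv : u ≠ v) (x : Fin n → ZMod 2) :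
    identify f u v (x + 𝐞 u) = identify f u v x := by
  unfold identify
  congr 1
  funext t
  split_ifs with h
  · simp [Ne.symm huv]
  · simp [h]

lemma essential_identify_of_not_lost (h : ¬ Lost f u v k) (hku : k ≠ u) (hkv : k ≠ v) :
    Essential (identify f u v) k := by
  simp only [Lost, not_forall] at h
  obtain ⟨x, hx, hne⟩ := h
  refine essential_iff_exists_apply_add_ne.mpr ⟨x, ?_⟩
  rwa [identify_apply_of_eq hx, identify_apply_of_eq (by simpa [hku, hkv] using hx)]

lemma essential_identify_of_not_lostPair (h : ¬ LostPair f u v) (huv : u ≠ v) :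
    Essential (identify f u v) v := by
  simp only [LostPair, not_forall] at h
  obtain ⟨x, hx, hne⟩ := h
  refine essential_iff_exists_apply_add_ne.mpr ⟨x, ?_⟩
  rwa [identify_apply_of_eq hx, ← identify_apply_add_basisVec_self huv, add_right_comm,
    identify_apply_of_eq (apply_add_basisVec_add_basisVec_eq hx)]

lemma strictMinorS_identify (hu : Essential f u) (hv : Essential f v) (huv : u ≠ v) :
    StrictMinorS ⟨n, identify f u v⟩ ⟨n, f⟩ := by
  refine ⟨minor_identify f u v, fun h => ?_⟩
  have hlt : essArity (identify f u v) < essArity f :=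
    (card_le_card (essVars_identify_subset hv huv)).trans_lt
      (card_erase_lt_of_mem (mem_essVars.mpr hu))
  exact (essArity_le_of_minor h).not_gt hlt

noncomputable def lostVars (f : BFn n) (u v : Fin n) : Finset (Fin n) :=
  (essVars f).filter fun k => k ≠ u ∧ k ≠ v ∧ Lost f u v k

noncomputable def lossCount (f : BFn n) (u v : Fin n) : ℕ :=
  #(lostVars f u v) + if LostPair f u v then 1 else 0

lemma mem_lostVars : k ∈ lostVars f u v ↔ Essential f k ∧ k ≠ u ∧ k ≠ v ∧ Lost f u v k := by
  simp [lostVars]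

lemma lostVars_comm (f : BFn n) (u v : Fin n) : lostVars f u v = lostVars f v u := by
  ext k
  simp only [mem_lostVars]
  exact ⟨fun ⟨he, hu, hv, hl⟩ => ⟨he, hv, hu, hl.symm⟩,
    fun ⟨he, hv, hu, hl⟩ => ⟨he, hu, hv, hl.symm⟩⟩

lemma essArity_le_essArity_identify_add (huv : u ≠ v) :
    essArity f ≤ essArity (identify f u v) + 1 + lossCount f u v := by
  have hsub : essVars f ⊆ insert u (essVars (identify f u v) ∪ lostVars f u v ∪
      if LostPair f u v then {v} else ∅) := by
    intro k hk
    rw [mem_essVars] at hk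
    simp only [mem_insert, mem_union, mem_essVars, mem_lostVars]
    by_cases hku : k = u
    · exact Or.inl hku
    by_cases hkv : k = v
    · subst hkv
      by_cases hP : LostPair f u k
      · simp [hP]
      · exact Or.inr (Or.inl (Or.inl (essential_identify_of_not_lostPair hP huv)))
    by_cases hl : Lost f u v k
    · exact Or.inr (Or.inl (Or.inr ⟨hk, hku, hkv, hl⟩))
    · exact Or.inr (Or.inl (Or.inl (essential_identify_of_not_lost hl hku hkv)))
  have := (card_le_card hsub).trans (card_insert_le _ _)
  have := card_union_le (essVars (identify f u v) ∪ lostVars f u v)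
    (if LostPair f u v then {v} else ∅)
  have := card_union_le (essVars (identify f u v)) (lostVars f u v)
  have : #(if LostPair f u v then {v} else ∅ : Finset (Fin n)) =
      if LostPair f u v then 1 else 0 := by
    split_ifs <;> simp
  rw [essArity_eq_card_essVars, essArity_eq_card_essVars, lossCount]
  omega

variable {a b l : Fin n}

lemma card_lostVars_lt (hk : k ∈ lostVars f u v) (hl : l ∈ lostVars f u v) (hkl : k ≠ l)
    (hP : ¬ LostPair f u v) : #(lostVars f k l) < #(lostVars f u v) := by
  obtain ⟨-, hku, hkv, hlost⟩ := mem_lostVars.mp hk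
  obtain ⟨-, hlu, -, -⟩ := mem_lostVars.mp hl
  have hout : lostVars f k l \ {u, v} ⊆ ((lostVars f u v).erase k).erase l := fun w hw => by
    simp only [mem_sdiff, mem_insert, mem_singleton, not_or, mem_lostVars] at hw
    obtain ⟨⟨hwe, hwk, hwl, hw⟩, hwu, hwv⟩ := hw
    simp only [mem_erase, mem_lostVars]
    exact ⟨hwl, hwk, hwe, hwu, hwv, hlost.trans hw.symm hwu hwv (Ne.symm hkl)⟩
  obtain ⟨x, hx⟩ : ∃ x, lostVars f k l ∩ {u, v} ⊆ {x} := by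
    by_cases hu : u ∈ lostVars f k l
    · have hv : v ∉ lostVars f k l := fun hv =>
        hP (lostPair_of_lost_of_lost hlost (mem_lostVars.mp hu).2.2.2
          (mem_lostVars.mp hv).2.2.2 hku hlu hkl)
      refine ⟨u, fun w hw => ?_⟩
      simp only [mem_inter, mem_insert, mem_singleton] at hw ⊢
      rcases hw with ⟨hw, rfl | rfl⟩ <;> simp_all
    · refine ⟨v, fun w hw => ?_⟩
      simp only [mem_inter, mem_insert, mem_singleton] at hw ⊢
      rcases hw with ⟨hw, rfl | rfl⟩ <;> simp_all
  have hT : #(((lostVars f u v).erase k).erase l) + 2 = #(lostVars f u v) := by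
    rw [card_erase_of_mem (mem_erase.mpr ⟨Ne.symm hkl, hl⟩), card_erase_of_mem hk]
    have := one_lt_card.mpr ⟨k, hk, l, hl, hkl⟩
    omega
  have := (card_le_card hx).trans (card_singleton x).le
  have := card_sdiff_add_card_inter (lostVars f k l) {u, v}
  have := card_le_card hout
  omega

lemma erase_lostVars_subset (hk : k ∈ lostVars f a b) :
    (lostVars f b k).erase a ⊆ lostVars f a b := fun w hw => by
  obtain ⟨-, -, hkb, hlost⟩ := mem_lostVars.mp hk
  obtain ⟨hwa, hw⟩ := mem_erase.mp hw
  obtain ⟨hwe, hwb, -, hw⟩ := mem_lostVars.mp hw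
  exact mem_lostVars.mpr ⟨hwe, hwa, hwb, hlost.trans hw hwa hwb (Ne.symm hkb)⟩

lemma disjoint_lostVars (hP : LostPair f k l) (hbk : b ≠ k) (hbl : b ≠ l) (hkl : k ≠ l) :
    Disjoint (lostVars f b k) (lostVars f b l) := by
  refine disjoint_left.mpr fun w hwk hwl => ?_
  obtain ⟨hwe, -, hwk, hk⟩ := mem_lostVars.mp hwk
  obtain ⟨-, -, hwl, hl⟩ := mem_lostVars.mp hwl
  exact not_essential_iff.mpr
    (add_basisVec_invariant_of_lost_of_lost_of_lostPair hk hl hP hbk hbl hkl hwk hwl) hwe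

variable (f) in
/-- Every identification of two essential variables of `f` kills at least three of them. -/
def AllLossy : Prop :=
  ∀ u v, Essential f u → Essential f v → u ≠ v → 1 < lossCount f u v

lemma exists_lostPair_or_forall_lost (hf : AllLossy f)
    (hT : ∀ k ∈ lostVars f a b, ∀ l ∈ lostVars f a b, k ≠ l → LostPair f k l)
    (hb : Essential f b) :
    (∃ k ∈ lostVars f a b, LostPair f b k) ∨ ∀ k ∈ lostVars f a b, Lost f b k a := by
  by_contra! ⟨hnP, k₀, hk₀, hk₀a⟩
  set T := lostVars f a b
  have hbig : ∀ k ∈ T, 1 < #(lostVars f b k) := fun k hk => by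
    obtain ⟨hke, -, hkb, -⟩ := mem_lostVars.mp hk
    simpa [lossCount, hnP k hk] using hf b k hb hke (Ne.symm hkb)
  have hdisj : (T : Set (Fin n)).PairwiseDisjoint fun k => (lostVars f b k).erase a :=
    fun k hk l hl hkl => (disjoint_lostVars (hT k hk l hl hkl) (mem_lostVars.mp hk).2.2.1.symm
      (mem_lostVars.mp hl).2.2.1.symm hkl).mono (erase_subset _ _) (erase_subset _ _)
  have hle : ∑ k ∈ T, #((lostVars f b k).erase a) ≤ #T := by
    rw [← card_biUnion hdisj]
    exact card_le_card (biUnion_subset.mpr fun k hk => erase_lostVars_subset hk)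
  have hlt : ∑ k ∈ T, 1 < ∑ k ∈ T, #((lostVars f b k).erase a) := by
    refine sum_lt_sum (fun k hk => ?_) ⟨k₀, hk₀, ?_⟩
    · have := pred_card_le_card_erase (s := lostVars f b k) (a := a)
      have := hbig k hk
      omega
    · rw [erase_eq_of_notMem fun ha => hk₀a (mem_lostVars.mp ha).2.2.2]
      exact hbig k₀ hk₀
  simp only [sum_const, smul_eq_mul, mul_one] at hlt
  omega

lemma AllLossy.exists_not_lostPair (hf : AllLossy f) (h2 : 2 ≤ essArity f) :
    ∃ u v, Essential f u ∧ Essential f v ∧ u ≠ v ∧ ¬ LostPair f u v := by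
  by_contra! hall
  rw [essArity_eq_card_essVars] at h2
  obtain ⟨u, hu, v, hv, huv⟩ := one_lt_card.mp h2
  rw [mem_essVars] at hu hv
  obtain ⟨k, hk⟩ : (lostVars f u v).Nonempty := by
    have := hf u v hu hv huv
    rw [lossCount, if_pos (hall u v hu hv huv)] at this
    exact card_pos.mp (by omega)
  obtain ⟨hke, hku, hkv, hlost⟩ := mem_lostVars.mp hk
  exact not_essential_iff.mpr (hlost.add_invariant_of_add_invariant
    ((hall u k hu hke hku.symm).add_invariant (hall u v hu hv huv) (hall k v hke hv hkv)
      hku.symm huv.symm hkv.symm) huv) hke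

lemma AllLossy.lostPair (hf : AllLossy f)
    (hT : ∀ k ∈ lostVars f u v, ∀ l ∈ lostVars f u v, k ≠ l → LostPair f k l)
    (hu : Essential f u) (hv : Essential f v) (huv : u ≠ v) : LostPair f u v := by
  by_contra hnP
  have hT2 : 1 < #(lostVars f u v) := by simpa [lossCount, hnP] using hf u v hu hv huv
  obtain ⟨k, hk, l, hl, hkl⟩ := one_lt_card.mp hT2
  obtain ⟨-, hku, hkv, hkL⟩ := mem_lostVars.mp hk
  obtain ⟨-, hlu, hlv, hlL⟩ := mem_lostVars.mp hl
  rcases exists_lostPair_or_forall_lost (b := u) hf (lostVars_comm f u v ▸ hT) hu with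
    ⟨k', hk', hPu⟩ | hlostu
  · rw [← lostVars_comm] at hk'
    rcases exists_lostPair_or_forall_lost hf hT hv with ⟨l', hl', hPv⟩ | hlostv
    · obtain ⟨-, hk'u, hk'v, hk'L⟩ := mem_lostVars.mp hk'
      obtain ⟨-, hl'u, hl'v, hl'L⟩ := mem_lostVars.mp hl'
      by_cases hkl' : k' = l'
      · subst hkl'
        obtain ⟨m, hm, hmk'⟩ : ∃ m ∈ lostVars f u v, m ≠ k' := by
          by_cases hkk' : k = k'
          · exact ⟨l, hl, hkk' ▸ hkl.symm⟩
          · exact ⟨k, hk, hkk'⟩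
        obtain ⟨-, hmu, hmv, hmL⟩ := mem_lostVars.mp hm
        exact hnP (lostPair_of_lostPair_of_lostPair_of_lostPair hk'L hmL hPu hPv
          (hT k' hk' m hm hmk'.symm) huv hk'u hk'v hmu hmv hmk'.symm)
      · exact hnP (lostPair_of_lostPair_of_lostPair hk'L hl'L hPu hPv huv hk'u hk'v hl'u hl'v hkl')
    · exact not_essential_iff.mpr (add_basisVec_invariant_of_lost_of_lost_of_lostPair
        (hlostv k hk) (hlostv l hl) (hT k hk l hl hkl) hkv.symm hlv.symm hkl hku.symm hlu.symm) hu
  · rw [← lostVars_comm] at hlostu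
    exact not_essential_iff.mpr (add_basisVec_invariant_of_lost_of_lost_of_lostPair
        (hlostu k hk) (hlostu l hl) (hT k hk l hl hkl) hku.symm hlu.symm hkl hkv.symm hlv.symm) hv

theorem exists_lossCount_le_one (h2 : 2 ≤ essArity f) :
    ∃ u v, Essential f u ∧ Essential f v ∧ u ≠ v ∧ lossCount f u v ≤ 1 := by
  by_contra! h
  have hf : AllLossy f := h
  obtain ⟨u, v, hu, hv, huv, hnP⟩ := hf.exists_not_lostPair h2
  induction hT : #(lostVars f u v) using Nat.strong_induction_on generalizing u v with
  | _ m ih =>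
    refine hnP (hf.lostPair (fun k hk l hl hkl => ?_) hu hv huv)
    by_contra hP
    exact ih _ (hT ▸ card_lostVars_lt hk hl hkl hnP) k l (mem_lostVars.mp hk).1
      (mem_lostVars.mp hl).1 hkl hP rfl

end ArityGap

lemma arityGap_le_of_strictMinorS {F G : BF} (h : StrictMinorS G F) :
    arityGap F ≤ essS F - essS G :=
  Nat.sInf_le ⟨G, h, rfl⟩

/-- Salomaa: the arity gap of a Boolean function with at least
two essential variables is at most 2. -/
theorem stmt5 (F : BF) (h : 2 ≤ essS F) : arityGap F ≤ 2 := by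
  obtain ⟨n, f⟩ := F
  obtain ⟨u, v, hu, hv, huv, hloss⟩ := ArityGap.exists_lossCount_le_one (f := f) h
  have hdrop := ArityGap.essArity_le_essArity_identify_add (f := f) huv
  refine (arityGap_le_of_strictMinorS (ArityGap.strictMinorS_identify hu hv huv)).trans ?_
  change essArity f - essArity (identify f u v) ≤ 2
  omega
end

section
/- If g is a lower cover of a Boolean function f with ess g < ess f − 1, then g is, up to equivalence, the unique lower cover of f. -/
open Classical

/-!
Lower covers of `f` are, up to equivalence, the identification minors `f_{p=q}` of two
essential variables. Let `G ≅ f_{k=l}` lose at least two essential variables. If a cover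
identification `f_{a=b} ≅ G` makes (the image of) an essential variable `v` inessential, then
`f_{a=b}` is a minor of every `f_{p=v}`, so all these are covers equivalent to `G`. Hence if some
`f_{i=j}` is not equivalent to `G`, then `i` is never killed, and the nonempty set `Z` of killed
variables yields periods of `f` on hyperplanes `x_p = x_v` (translations by `e_u` or by
`e_p + e_v`), with `p = i` or `p ∈ Z`.
Each period gives a relation `W(S) + W(S ∆ {p, v}) = 0` between Walsh coefficients of
`(-1)^f`. A nonzero coefficient `W(S)` with `S ∩ Z` maximal either leaves a smaller such
configuration on `Z \ S`, or, when `Z ⊆ S`, is killed by an odd cycle of these relations.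
-/

open Finset Function

section

variable {n m : ℕ}

noncomputable def essSet (f : BFn n) : Finset (Fin n) := univ.filter (Essential f)

lemma mem_essSet {f : BFn n} {t : Fin n} : t ∈ essSet f ↔ Essential f t := by
  simp [essSet]

lemma coe_essSet {f : BFn n} : (essSet f : Set (Fin n)) = {t | Essential f t} := by
  ext; simp [essSet]

lemma essArity_eq_card (f : BFn n) : essArity f = #(essSet f) := rfl

lemma exists_essential_mem_of_ne (f : BFn n) (D : Finset (Fin n)) :
    ∀ {x y : Fin n → ZMod 2}, (∀ t ∉ D, x t = y t) → f x ≠ f y → ∃ t ∈ D, Essential f t := by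
  induction D using Finset.induction_on with
  | empty =>
    intro x y hxy hne
    exact absurd (congrArg f (funext fun t => hxy t (notMem_empty t))) hne
  | insert a D _ ih =>
    intro x y hxy hne
    by_cases hxa : f x = f (update x a (y a))
    · have hagree : ∀ t ∉ D, update x a (y a) t = y t := by
        intro t ht
        by_cases hta : t = a
        · subst hta; simp
        · rw [update_of_ne hta]; exact hxy t (by simp [hta, ht])
      obtain ⟨t, ht, hess⟩ := ih hagree (hxa ▸ hne)
      exact ⟨t, mem_insert_of_mem ht, hess⟩
    · exact ⟨a, mem_insert_self a D, x, _, fun t ht => (update_of_ne ht _ _).symm, hxa⟩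

lemma eq_of_forall_essential {f : BFn n} {x y : Fin n → ZMod 2}
    (h : ∀ t, Essential f t → x t = y t) : f x = f y := by
  by_contra hne
  obtain ⟨t, ht, hess⟩ :=
    exists_essential_mem_of_ne f (univ.filter fun t => x t ≠ y t) (by simp) hne
  exact (mem_filter.mp ht).2 (h t hess)

section Minor

variable {g : BFn m} {f : BFn n} {σ : Fin n → Fin m}

lemma exists_essential_of_minor (hσ : ∀ x, g x = f (fun t => x (σ t))) {k : Fin m}
    (hk : Essential g k) : ∃ t, Essential f t ∧ σ t = k := by
  obtain ⟨x, y, hxy, hne⟩ := hk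
  rw [hσ, hσ] at hne
  by_contra! h
  exact hne (eq_of_forall_essential fun t ht => hxy _ (h t ht))

lemma essSet_subset_image (hσ : ∀ x, g x = f (fun t => x (σ t))) :
    essSet g ⊆ (essSet f).image σ := by
  intro k hk
  obtain ⟨t, ht, rfl⟩ := exists_essential_of_minor hσ (mem_essSet.mp hk)
  exact mem_image_of_mem σ (mem_essSet.mpr ht)

lemma essArity_le_of_minor (h : Minor g f) : essArity g ≤ essArity f := by
  obtain ⟨σ, hσ⟩ := h
  exact (card_le_card (essSet_subset_image hσ)).trans card_image_le

lemma injOn_essSet_of_minor (hσ : ∀ x, g x = f (fun t => x (σ t)))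
    (hle : essArity f ≤ essArity g) : Set.InjOn σ (essSet f) :=
  card_image_iff.mp <|
    le_antisymm card_image_le (hle.trans (card_le_card (essSet_subset_image hσ)))

lemma minor_of_injOn_essSet [Nonempty (Fin n)] (hσ : ∀ x, g x = f (fun t => x (σ t)))
    (hinj : Set.InjOn σ (essSet f)) : Minor f g := by
  refine ⟨invFunOn σ (essSet f), fun x => ?_⟩
  rw [hσ]
  exact eq_of_forall_essential fun t ht =>
    by rw [hinj.leftInvOn_invFunOn (mem_essSet.mpr ht)]

end Minor

lemma MinorS.trans {A B C : BF} (h₁ : MinorS A B) (h₂ : MinorS B C) : MinorS A C := by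
  obtain ⟨σ, hσ⟩ := h₁
  obtain ⟨τ, hτ⟩ := h₂
  exact ⟨fun t => σ (τ t), fun x => by rw [hσ, hτ]⟩

lemma EquivS.symm {A B : BF} (h : EquivS A B) : EquivS B A := ⟨h.2, h.1⟩

lemma EquivS.trans {A B C : BF} (h₁ : EquivS A B) (h₂ : EquivS B C) : EquivS A C :=
  ⟨MinorS.trans h₁.1 h₂.1, MinorS.trans h₂.2 h₁.2⟩

lemma EquivS.essS_eq {A B : BF} (h : EquivS A B) : essS A = essS B :=
  le_antisymm (essArity_le_of_minor h.1) (essArity_le_of_minor h.2)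

section Identify

variable {f : BFn n} {i j p q : Fin n}

lemma identify_apply (f : BFn n) (i j : Fin n) (x : Fin n → ZMod 2) :
    identify f i j x = f (fun t => x (update id i j t)) := by
  unfold identify
  congr 1
  funext t
  by_cases ht : t = i <;> simp [ht]

lemma identify_apply_of_eq {x : Fin n → ZMod 2} (h : x i = x j) : identify f i j x = f x := by
  rw [identify_apply]
  congr 1
  funext t
  by_cases ht : t = i <;> simp [ht, h]

lemma minor_identify (f : BFn n) (i j : Fin n) : Minor (identify f i j) f :=
  ⟨update id i j, identify_apply f i j⟩

lemma minor_identify_of_eq {g : BFn m} {τ : Fin n → Fin m}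
    (hτ : ∀ x, g x = f (fun t => x (τ t))) (h : τ p = τ q) : Minor g (identify f p q) :=
  ⟨τ, fun x => by
    rw [hτ, identify_apply]
    congr 1
    funext t
    by_cases ht : t = p <;> simp [ht, h]⟩

lemma not_essential_identify_self (hij : i ≠ j) : ¬Essential (identify f i j) i := by
  rintro ⟨x, y, hxy, hne⟩
  apply hne
  rw [identify_apply, identify_apply]
  congr 1
  funext t
  by_cases ht : t = i
  · simp [ht, hxy j hij.symm]
  · simp [ht, hxy t ht]

lemma not_minor_identify (hp : Essential f p) (hq : Essential f q) (hpq : p ≠ q) :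
    ¬Minor f (identify f p q) := by
  rintro ⟨σ, hσ⟩
  have hτ : ∀ x, f x = f (fun t => x (σ (update id p q t))) := fun x => by
    rw [hσ, identify_apply]
  exact hpq <| injOn_essSet_of_minor hτ le_rfl (mem_essSet.mpr hp) (mem_essSet.mpr hq)
    (by simp [hpq.symm])

lemma comp_update_id_of_not_essential {g : BFn m} {d : Fin m} (hd : ¬Essential g d)
    (c : Fin m) (x : Fin m → ZMod 2) : g (fun t => x (update id d c t)) = g x :=
  eq_of_forall_essential fun t ht => by
    rw [update_of_ne (fun h : t = d => hd (h ▸ ht))]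
    rfl

end Identify

def IsPeriodOn (f : BFn n) (p v : Fin n) (d : Fin n → ZMod 2) : Prop :=
  ∀ x, x p = x v → f (x + d) = f x

section Period

variable {f : BFn n} {p v u : Fin n}

/-- On the hyperplane `x p = x v` the function `f` agrees with `identify f p v`. -/
lemma isPeriodOn_of_not_essential {d : Fin n → ZMod 2} (hd : d p = d v)
    (h : ∀ t, d t ≠ 0 → ¬Essential (identify f p v) t) : IsPeriodOn f p v d := by
  intro x hx
  have hxd : (x + d) p = (x + d) v := by simp [hx, hd]
  rw [← identify_apply_of_eq (f := f) hxd, ← identify_apply_of_eq (f := f) hx]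
  refine eq_of_forall_essential fun t ht => ?_
  have : d t = 0 := by
    by_contra h'
    exact h t h' ht
  simp [this]

lemma isPeriodOn_single (hup : u ≠ p) (huv : u ≠ v) (h : ¬Essential (identify f p v) u) :
    IsPeriodOn f p v (Pi.single u 1) := by
  refine isPeriodOn_of_not_essential (by simp [hup.symm, huv.symm]) fun t ht => ?_
  obtain rfl : t = u := by
    by_contra h'
    simp [h'] at ht
  exact h

lemma isPeriodOn_pair (hpv : p ≠ v) (h : ¬Essential (identify f p v) v) :
    IsPeriodOn f p v (Pi.single p 1 + Pi.single v 1) := by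
  refine isPeriodOn_of_not_essential (by simp [hpv, hpv.symm]) fun t ht => ?_
  rcases eq_or_ne t v with rfl | htv
  · exact h
  obtain rfl : t = p := by
    by_contra h'
    simp [h', htv] at ht
  exact not_essential_identify_self hpv

end Period

def sgn (c : ZMod 2) : ℤ := if c = 0 then 1 else -1

lemma sgn_add (a b : ZMod 2) : sgn (a + b) = sgn a * sgn b := by
  fin_cases a <;> fin_cases b <;> rfl

lemma sgn_mul_self (a : ZMod 2) : sgn a * sgn a = 1 := by
  fin_cases a <;> rfl

lemma sgn_injective : Injective sgn := by
  intro a b h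
  fin_cases a <;> fin_cases b <;> first | rfl | exact absurd h (by decide)

/-- The Walsh character `x ↦ (-1) ^ (∑ t ∈ S, x t)`. -/
def walsh (S : Finset (Fin n)) (x : Fin n → ZMod 2) : ℤ := ∏ t ∈ S, sgn (x t)

section Walsh

variable {S P : Finset (Fin n)} {x y : Fin n → ZMod 2} {u : Fin n}

lemma walsh_add : walsh S (x + y) = walsh S x * walsh S y := by
  simp [walsh, sgn_add, prod_mul_distrib]

lemma walsh_single : walsh S (Pi.single u 1) = if u ∈ S then -1 else 1 := by
  simp only [walsh, Pi.single_apply, apply_ite sgn]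
  exact prod_ite_eq' S u _

lemma walsh_single_of_mem (hu : u ∈ S) : walsh S (Pi.single u 1) = -1 := by
  simp [walsh_single, hu]

lemma walsh_single_of_notMem (hu : u ∉ S) : walsh S (Pi.single u 1) = 1 := by
  simp [walsh_single, hu]

lemma walsh_symmDiff : walsh (symmDiff S P) x = walsh S x * walsh P x := by
  have h : ∀ T : Finset (Fin n), walsh T x = ∏ t, if t ∈ T then sgn (x t) else 1 := fun T => by
    rw [prod_ite_mem, univ_inter, walsh]
  simp only [h, ← prod_mul_distrib]
  refine prod_congr rfl fun t _ => ?_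
  by_cases hS : t ∈ S <;> by_cases hP : t ∈ P <;> simp [hS, hP, mem_symmDiff, sgn_mul_self]

lemma one_add_sgn_add (a b : ZMod 2) : 1 + sgn (a + b) = if a = b then 2 else 0 := by
  fin_cases a <;> fin_cases b <;> rfl

lemma sum_walsh_mul_walsh (x y : Fin n → ZMod 2) :
    ∑ S, walsh S x * walsh S y = if x = y then 2 ^ n else 0 := by
  have h : ∀ S, walsh S x * walsh S y = ∏ t ∈ S, sgn (x t + y t) := fun S => by
    simp [walsh, sgn_add, prod_mul_distrib]
  rw [sum_congr rfl fun S _ => h S, ← powerset_univ, ← prod_one_add]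
  simp only [one_add_sgn_add]
  split_ifs with hxy
  · simp [hxy]
  · obtain ⟨t, ht⟩ := Function.ne_iff.mp hxy
    exact prod_eq_zero (mem_univ t) (if_neg ht)

def walshCoeff (f : BFn n) (S : Finset (Fin n)) : ℤ := ∑ x, sgn (f x) * walsh S x

lemma sum_walshCoeff_mul_walsh (f : BFn n) (y : Fin n → ZMod 2) :
    ∑ S, walshCoeff f S * walsh S y = 2 ^ n * sgn (f y) := by
  simp only [walshCoeff, sum_mul, mul_assoc]
  rw [sum_comm]
  simp [← mul_sum, sum_walsh_mul_walsh, mul_comm]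

end Walsh

section WalshCoeff

variable {f : BFn n} {u p v : Fin n}

lemma not_essential_of_forall_add_single (h : ∀ y, f (y + Pi.single u 1) = f y) :
    ¬Essential f u := by
  rintro ⟨x, y, hxy, hne⟩
  have hy : y = x + Pi.single u (y u - x u) := by
    funext t
    by_cases ht : t = u
    · subst ht; simp
    · simp [ht, hxy t ht]
  rcases (by decide : ∀ c : ZMod 2, c = 0 ∨ c = 1) (y u - x u) with hc | hc <;>
    rw [hy, hc] at hne
  · simp at hne
  · exact hne (h x).symm

lemma exists_walshCoeff_ne_zero (hu : Essential f u) :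
    ∃ S, u ∈ S ∧ walshCoeff f S ≠ 0 := by
  by_contra! h
  refine not_essential_of_forall_add_single (fun y => sgn_injective ?_) hu
  refine mul_left_cancel₀ (pow_ne_zero n two_ne_zero : (2 : ℤ) ^ n ≠ 0) ?_
  rw [← sum_walshCoeff_mul_walsh, ← sum_walshCoeff_mul_walsh]
  refine sum_congr rfl fun S _ => ?_
  by_cases huS : u ∈ S
  · simp [h S huS]
  · rw [walsh_add, walsh_single_of_notMem huS, mul_one]

/-- The left side is twice a sum over the hyperplane `x p = x v`, which the involution
`x ↦ x + d` negates. -/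
lemma IsPeriodOn.walshCoeff_add_walshCoeff_symmDiff {d : Fin n → ZMod 2}
    (h : IsPeriodOn f p v d) (hpv : p ≠ v) (hd : d p = d v) {S : Finset (Fin n)}
    (hS : walsh S d = -1) : walshCoeff f S + walshCoeff f (symmDiff S {p, v}) = 0 := by
  have hsplit : ∀ x : Fin n → ZMod 2,
      sgn (f x) * walsh S x + sgn (f x) * walsh (symmDiff S {p, v}) x =
        if x p = x v then 2 * (sgn (f x) * walsh S x) else 0 := by
    intro x
    rw [walsh_symmDiff, show walsh {p, v} x = sgn (x p + x v) by
        rw [walsh, prod_pair hpv, sgn_add],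
      show ∀ a b c : ℤ, a * b + a * (b * c) = a * b * (1 + c) by intros; ring, one_add_sgn_add]
    split_ifs <;> ring
  rw [walshCoeff, walshCoeff, ← sum_add_distrib, sum_congr rfl fun x _ => hsplit x, ← sum_filter]
  refine sum_involution (fun x _ => x + d) (fun x hx => ?_) (fun x _ _ hx => ?_)
    (fun x hx => ?_) (fun x _ => ?_)
  · rw [h x (mem_filter.mp hx).2, walsh_add, hS]
    ring
  · rw [add_eq_left] at hx
    simp [hx, walsh, sgn] at hS
  · simp [(mem_filter.mp hx).2, hd]
  · funext t
    exact CharTwo.add_cancel_right (x t) (d t)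

lemma IsPeriodOn.walshCoeff_add_walshCoeff_symmDiff_of_single
    (h : IsPeriodOn f p v (Pi.single u 1)) (hpv : p ≠ v) (hup : u ≠ p) (huv : u ≠ v)
    {S : Finset (Fin n)} (hu : u ∈ S) :
    walshCoeff f S + walshCoeff f (symmDiff S {p, v}) = 0 :=
  h.walshCoeff_add_walshCoeff_symmDiff hpv (by simp [hup.symm, huv.symm])
    (walsh_single_of_mem hu)

end WalshCoeff

section Descent

variable {f : BFn n} {i p v : Fin n} {d : Fin n → ZMod 2} {S Z : Finset (Fin n)}

lemma IsPeriodOn.exists_walshCoeff_ne_zero_card_inter_lt (h : IsPeriodOn f p v d)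
    (hpv : p ≠ v) (hd : d p = d v) (hSd : walsh S d = -1) (hW : walshCoeff f S ≠ 0)
    (hv : v ∈ Z \ S) (hp : p ∉ S ∩ Z) :
    ∃ T, walshCoeff f T ≠ 0 ∧ #(S ∩ Z) < #(T ∩ Z) := by
  refine ⟨symmDiff S {p, v}, fun h0 => hW ?_, ?_⟩
  · linarith [h.walshCoeff_add_walshCoeff_symmDiff hpv hd hSd]
  rw [mem_sdiff] at hv
  have hsub : insert v (S ∩ Z) ⊆ symmDiff S {p, v} ∩ Z := by
    intro t ht
    rw [mem_insert] at ht
    rcases ht with rfl | ht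
    · simp [mem_symmDiff, hv]
    · have htp : t ≠ p := by rintro rfl; exact hp ht
      have htv : t ≠ v := by rintro rfl; exact hv.2 (mem_inter.mp ht).1
      simp_all [mem_symmDiff]
  calc #(S ∩ Z) < #(insert v (S ∩ Z)) := card_lt_card (ssubset_insert (by simp [hv.2]))
    _ ≤ _ := card_le_card hsub

/-- The hyperplane periods produced by the essential variables that cover identifications
kill, when the identification of `i` with some variable is not a cover. -/
structure IsFlipSystem (f : BFn n) (i : Fin n) (Z : Finset (Fin n)) : Prop where
  nonempty : Z.Nonempty
  notMem : i ∉ Z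
  essential : ∀ v ∈ Z, Essential f v
  single : ∀ v ∈ Z, ∃ u ∈ Z, u ≠ v ∧ IsPeriodOn f i v (Pi.single u 1)
  pair : ∀ v' ∈ Z, ∀ v ∈ Z, v' ≠ v →
    IsPeriodOn f v' v (Pi.single v' 1 + Pi.single v 1) ∨
      ∃ u ∈ Z, u ≠ v' ∧ u ≠ v ∧ IsPeriodOn f v' v (Pi.single u 1)

lemma IsFlipSystem.ne_of_mem (hZ : IsFlipSystem f i Z) {w : Fin n} (hw : w ∈ Z) : w ≠ i :=
  fun h => hZ.notMem (h ▸ hw)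

/-- For distinct `v, v' ∈ Z ⊆ S` the three relations between the coefficients at `S`,
`S ∆ {i, v}` and `S ∆ {i, v'}` form an odd cycle. -/
lemma IsFlipSystem.walshCoeff_eq_zero (hZ : IsFlipSystem f i Z) (hS : Z ⊆ S) :
    walshCoeff f S = 0 := by
  obtain ⟨v, hv⟩ := hZ.nonempty
  obtain ⟨v', hv', hv'v, h₁⟩ := hZ.single v hv
  obtain ⟨u₂, hu₂, hu₂v', h₂⟩ := hZ.single v' hv'
  have hiv := (hZ.ne_of_mem hv).symm
  have hiv' := (hZ.ne_of_mem hv').symm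
  have e₁ := h₁.walshCoeff_add_walshCoeff_symmDiff_of_single hiv (hZ.ne_of_mem hv') hv'v (hS hv')
  have e₂ := h₂.walshCoeff_add_walshCoeff_symmDiff_of_single hiv' (hZ.ne_of_mem hu₂) hu₂v'
    (S := symmDiff S {i, v'}) (by simp [mem_symmDiff, hS hu₂, hZ.ne_of_mem hu₂, hu₂v'])
  rw [symmDiff_symmDiff_cancel_right] at e₂
  have hT : symmDiff (symmDiff S {i, v}) {v', v} = symmDiff S {i, v'} := by
    ext t
    by_cases h1 : t = i <;> by_cases h2 : t = v <;> by_cases h3 : t = v' <;>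
      simp_all [mem_symmDiff]
  have e₃ : walshCoeff f (symmDiff S {i, v}) + walshCoeff f (symmDiff S {i, v'}) = 0 := by
    rw [← hT]
    rcases hZ.pair v' hv' v hv hv'v with hA | ⟨u, hu, huv', huv, hB⟩
    · refine hA.walshCoeff_add_walshCoeff_symmDiff hv'v (by simp [hv'v, hv'v.symm]) ?_
      rw [walsh_add, walsh_single_of_mem (by simp [mem_symmDiff, hS hv', hv'v, hiv'.symm]),
        walsh_single_of_notMem (by simp [mem_symmDiff, hS hv])]
      ring
    · exact hB.walshCoeff_add_walshCoeff_symmDiff_of_single hv'v huv' huv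
        (by simp [mem_symmDiff, hS hu, hZ.ne_of_mem hu, huv])
  linarith

/-- Choose `S₀` with `walshCoeff f S₀ ≠ 0` meeting `Z` maximally; the periods then cannot
move any coordinate of `Z \ S₀` into `S₀`, so `Z \ S₀` is again a flip system. -/
lemma IsFlipSystem.exists_ssubset (hZ : IsFlipSystem f i Z) : ∃ M ⊂ Z, IsFlipSystem f i M := by
  obtain ⟨v, hv⟩ := hZ.nonempty
  obtain ⟨S, hvS, hS⟩ := exists_walshCoeff_ne_zero (hZ.essential v hv)
  obtain ⟨S₀, hS₀, hmax⟩ := exists_max_image (univ.filter fun S => walshCoeff f S ≠ 0)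
    (fun S => #(S ∩ Z)) ⟨S, by simpa using hS⟩
  simp only [mem_filter, mem_univ, true_and] at hS₀ hmax
  have hmem : ∀ {p w u : Fin n}, IsPeriodOn f p w (Pi.single u 1) → p ≠ w → u ≠ p → u ≠ w →
      u ∈ Z → w ∈ Z \ S₀ → p ∉ S₀ ∩ Z → u ∈ Z \ S₀ := by
    intro p w u h hpw hup huw hu hw hp
    refine mem_sdiff.mpr ⟨hu, fun huS => ?_⟩
    obtain ⟨T, hT, hlt⟩ := h.exists_walshCoeff_ne_zero_card_inter_lt hpw
      (by simp [hup.symm, huw.symm]) (walsh_single_of_mem huS) hS₀ hw hp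
    exact (hmax T hT).not_gt hlt
  have hiS : i ∉ S₀ ∩ Z := fun h => hZ.notMem (mem_inter.mp h).2
  refine ⟨Z \ S₀, ?_, ⟨?_, ?_, ?_, ?_, ?_⟩⟩
  · obtain ⟨w, hw⟩ : (S₀ ∩ Z).Nonempty := card_pos.mp <|
      (card_pos.mpr ⟨v, mem_inter.mpr ⟨hvS, hv⟩⟩).trans_le (hmax S hS)
    exact (ssubset_iff_of_subset sdiff_subset).mpr
      ⟨w, (mem_inter.mp hw).2, fun h => (mem_sdiff.mp h).2 (mem_inter.mp hw).1⟩
  · rw [nonempty_iff_ne_empty, Ne, sdiff_eq_empty_iff_subset]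
    exact fun h => hS₀ (hZ.walshCoeff_eq_zero h)
  · exact fun h => hZ.notMem (mem_sdiff.mp h).1
  · exact fun w hw => hZ.essential w (mem_sdiff.mp hw).1
  · intro w hw
    obtain ⟨u, hu, huw, h⟩ := hZ.single w (mem_sdiff.mp hw).1
    exact ⟨u, hmem h (hZ.ne_of_mem (mem_sdiff.mp hw).1).symm (hZ.ne_of_mem hu) huw hu hw hiS,
      huw, h⟩
  · intro w' hw' w hw hw'w
    refine (hZ.pair w' (mem_sdiff.mp hw').1 w (mem_sdiff.mp hw).1 hw'w).imp id ?_
    rintro ⟨u, hu, huw', huw, h⟩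
    exact ⟨u, hmem h hw'w huw' huw hu hw (fun h => (mem_sdiff.mp hw').2 (mem_inter.mp h).1),
      huw', huw, h⟩

lemma not_isFlipSystem (f : BFn n) (i : Fin n) (Z : Finset (Fin n)) : ¬IsFlipSystem f i Z := by
  induction Z using Finset.strongInduction with
  | H Z ih =>
    intro hZ
    obtain ⟨M, hM, hMZ⟩ := hZ.exists_ssubset
    exact ih M hM hMZ

end Descent

lemma LowerCover.minorS_of_minorS {F G H : BF} (hG : LowerCover G F) (hGH : MinorS G H)
    (hHF : StrictMinorS H F) : MinorS H G := by
  by_contra h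
  exact hG.2 ⟨H, ⟨hGH, h⟩, hHF⟩

section LowerCover

variable {f : BFn n} {G : BF} {a b p q v : Fin n}

lemma LowerCover.equivS_identify (hG : LowerCover G ⟨n, f⟩) (hpq : p ≠ q)
    (hp : Essential f p) (hq : Essential f q) (h : MinorS G ⟨n, identify f p q⟩) :
    EquivS ⟨n, identify f p q⟩ G :=
  ⟨hG.minorS_of_minorS h ⟨minor_identify f p q, not_minor_identify hp hq hpq⟩, h⟩

def IsCoverPair (f : BFn n) (G : BF) (a b : Fin n) : Prop :=
  a ≠ b ∧ Essential f a ∧ Essential f b ∧ EquivS ⟨n, identify f a b⟩ G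

lemma LowerCover.exists_isCoverPair (hG : LowerCover G ⟨n, f⟩) (hf : 0 < essArity f) :
    ∃ a b, IsCoverPair f G a b := by
  obtain ⟨⟨σ, hσ⟩, hfG⟩ := hG.1
  by_cases hinj : Set.InjOn σ (essSet f)
  · obtain ⟨t, -⟩ := card_pos.mp hf
    have : Nonempty (Fin n) := ⟨t⟩
    exact absurd (minor_of_injOn_essSet hσ hinj) hfG
  · simp only [Set.InjOn, not_forall] at hinj
    obtain ⟨a, ha, b, hb, hab, hne⟩ := hinj
    rw [coe_essSet] at ha hb
    exact ⟨a, b, hne, ha, hb,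
      hG.equivS_identify hne ha hb (minor_identify_of_eq hσ hab)⟩

lemma IsCoverPair.exists_not_essential (hab : IsCoverPair f G a b)
    (hlt : essS G + 1 < essArity f) :
    ∃ u, u ≠ a ∧ Essential f u ∧ ¬Essential (identify f a b) u := by
  obtain ⟨hne, ha, -, hG⟩ := hab
  have hcard : #(essSet (identify f a b)) < #((essSet f).erase a) := by
    rw [card_erase_of_mem (mem_essSet.mpr ha)]
    have : essArity (identify f a b) = essS G := hG.essS_eq
    rw [← essArity_eq_card, ← essArity_eq_card]
    omega
  obtain ⟨u, hu, hu'⟩ := exists_mem_notMem_of_card_lt_card hcard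
  obtain ⟨hua, hu⟩ := mem_erase.mp hu
  exact ⟨u, hua, mem_essSet.mp hu, fun h => hu' (mem_essSet.mpr h)⟩

def Killable (f : BFn n) (G : BF) (v : Fin n) : Prop :=
  Essential f v ∧ ∃ a b, IsCoverPair f G a b ∧ ¬Essential (identify f a b) (update id a b v)

/-- Merging the dead image of `v` with the image of `p` shows that `identify f a b`, hence
`G`, is a minor of `identify f p v` and of `identify f v p`. -/
lemma Killable.isCoverPair (hG : LowerCover G ⟨n, f⟩) (hv : Killable f G v)
    (hp : Essential f p) (hpv : p ≠ v) : IsCoverPair f G p v ∧ IsCoverPair f G v p := by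
  obtain ⟨hv, a, b, ⟨-, -, -, -, hGab⟩, hdead⟩ := hv
  set τ : Fin n → Fin n :=
    fun t => update id (update id a b v) (update id a b p) (update id a b t)
  have hτ : ∀ x, identify f a b x = f (fun t => x (τ t)) := fun x => by
    rw [← comp_update_id_of_not_essential hdead (update id a b p) x, identify_apply]
  have hτpv : τ p = τ v := by
    by_cases h : update id a b p = update id a b v <;> simp [τ, h]
  exact ⟨⟨hpv, hp, hv, hG.equivS_identify hpv hp hv
      (MinorS.trans hGab (minor_identify_of_eq hτ hτpv))⟩,
    ⟨hpv.symm, hv, hp, hG.equivS_identify hpv.symm hv hp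
      (MinorS.trans hGab (minor_identify_of_eq hτ hτpv.symm))⟩⟩

lemma IsCoverPair.exists_killable (hab : IsCoverPair f G a b) (hlt : essS G + 1 < essArity f) :
    ∃ u, u ≠ a ∧ Killable f G u ∧ ¬Essential (identify f a b) u := by
  obtain ⟨u, hua, hu, hdead⟩ := hab.exists_not_essential hlt
  exact ⟨u, hua, ⟨hu, a, b, hab, by rwa [update_of_ne hua]⟩, hdead⟩

lemma isFlipSystem_killable (hG : LowerCover G ⟨n, f⟩) (hlt : essS G + 1 < essArity f)
    {k l i : Fin n} (hkl : IsCoverPair f G k l) (hi : Essential f i) (hik : ¬Killable f G i) :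
    IsFlipSystem f i (univ.filter (Killable f G)) := by
  refine ⟨?_, by simpa using hik, fun v hv => (mem_filter.mp hv).2.1, fun v hv => ?_,
    fun v' hv' v hv hv'v => ?_⟩
  · obtain ⟨u, -, hu, -⟩ := hkl.exists_killable hlt
    exact ⟨u, by simpa using hu⟩
  · simp only [mem_filter, mem_univ, true_and] at hv
    have hiv : i ≠ v := by rintro rfl; exact hik hv
    have hcover := (hv.isCoverPair hG hi hiv).1
    obtain ⟨u, hui, hu, hdead⟩ := hcover.exists_killable hlt
    have huv : u ≠ v := by
      rintro rfl
      exact hik ⟨hi, i, u, hcover, by simpa using hdead⟩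
    exact ⟨u, by simpa using hu, huv, isPeriodOn_single hui huv hdead⟩
  · simp only [mem_filter, mem_univ, true_and] at hv hv'
    obtain ⟨u, huv', hu, hdead⟩ := (hv.isCoverPair hG hv'.1 hv'v).1.exists_killable hlt
    by_cases huv : u = v
    · exact Or.inl (isPeriodOn_pair hv'v (huv ▸ hdead))
    · exact Or.inr ⟨u, by simpa using hu, huv', huv, isPeriodOn_single huv' huv hdead⟩

theorem isCoverPair_of_lowerCover (hG : LowerCover G ⟨n, f⟩) (hlt : essS G + 1 < essArity f)
    (hpq : p ≠ q) (hp : Essential f p) (hq : Essential f q) : IsCoverPair f G p q := by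
  by_contra hpq'
  obtain ⟨k, l, hkl⟩ := hG.exists_isCoverPair (by omega)
  have hp' : ¬Killable f G p := fun h => hpq' (h.isCoverPair hG hq hpq.symm).2
  exact not_isFlipSystem f p _ (isFlipSystem_killable hG hlt hkl hp hp')

end LowerCover

end

/-- a lower cover losing more than one essential variable is the
unique lower cover up to equivalence. -/
theorem stmt10 (F G : BF) (h : LowerCover G F) (hlt : essS G + 1 < essS F) :
    ∀ G' : BF, LowerCover G' F → EquivS G' G := by
  intro G' hG'
  obtain ⟨n, f⟩ := F
  obtain ⟨i, j, hij, hi, hj, hG'f⟩ := hG'.exists_isCoverPair (show 0 < essArity f by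
    have : essS G + 1 < essArity f := hlt; omega)
  exact hG'f.symm.trans (isCoverPair_of_lowerCover h hlt hij hi hj).2.2.2
end
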